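/- Let D be an n×n nonnegative real demand matrix, let δ > 0 and s ≥ 1, and consider a schedule of D over s parallel switches with reconfiguration delay δ that covers D. Suppose some row or some column of D has exactly s nonzero entries, whose values listed in non-increasing order are x₁ ≥ x₂ ≥ ⋯ ≥ x_s > 0. If the schedule uses s + m configurations in total across all switches for some m with 0 ≤ m ≤ s − 1, then the makespan of the schedule is at least δ + x_{m+1}. -/

import Mathlib

open Finset

/-- A configuration of an optical switch: a permutation of the `n` ports
together with a (time) weight. -/
abbrev Config (n : ℕ) := Equiv.Perm (Fin n) × ℝ

/-- A schedule over `s` parallel switches assigns to each switch a finite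
list of configurations. -/
abbrev Schedule (n s : ℕ) := Fin s → List (Config n)

/-- All configuration weights of the schedule are positive. -/
def ValidWeights {n s : ℕ} (S : Schedule n s) : Prop :=
  ∀ h : Fin s, ∀ c ∈ S h, 0 < c.2

/-- Total weight of all configurations (over all switches) servicing entry `(i, j)`,
i.e. whose permutation maps `i` to `j`. -/
def servedWeight {n s : ℕ} (S : Schedule n s) (i j : Fin n) : ℝ :=
  ∑ h : Fin s, (((S h).filter (fun c => decide (c.1 i = j))).map Prod.snd).sum

/-- The schedule covers the demand matrix `D`. -/
def Covers {n s : ℕ} (D : Matrix (Fin n) (Fin n) ℝ) (S : Schedule n s) : Prop :=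
  ∀ i j : Fin n, D i j ≤ servedWeight S i j

/-- The load of switch `h`: each configuration contributes the reconfiguration
delay `δ` plus its weight. -/
def load {n s : ℕ} (δ : ℝ) (S : Schedule n s) (h : Fin s) : ℝ :=
  ((S h).map (fun c => δ + c.2)).sum

/-- The makespan of the schedule: the maximum load over the switches. -/
noncomputable def makespan {n s : ℕ} (δ : ℝ) (S : Schedule n s) : ℝ :=
  ⨆ h : Fin s, load δ S h

/-!
A configuration is a permutation, so it services at most one entry of any given row or
column, while each of the `s` positive entries of the distinguished line needs at least one
configuration. With only `s + m` configurations, at most `m` of these entries are serviced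
twice or more, so one of the `m + 1` largest entries, all `≥ x (m + 1)`, is covered by a
single configuration. That configuration has weight at least `x (m + 1)`, and the switch
carrying it has load at least `δ + x (m + 1)`.
-/

lemma List.sum_countP_le_length {α ι : Type*} (T : Finset ι) (p : ι → α → Bool)
    (hp : ∀ c, ∀ a ∈ T, ∀ b ∈ T, p a c → p b c → a = b) (l : List α) :
    ∑ a ∈ T, l.countP (p a) ≤ l.length := by
  induction l with
  | nil => simp
  | cons c l ih =>
    have hc : #{a ∈ T | p a c} ≤ 1 :=
      card_le_one.2 fun a ha b hb => hp c a (Finset.mem_filter.1 ha).1 b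
        (Finset.mem_filter.1 hb).1 (Finset.mem_filter.1 ha).2 (Finset.mem_filter.1 hb).2
    simp only [List.countP_cons, sum_add_distrib, sum_boole, Nat.cast_id, List.length_cons]
    omega

lemma Finset.exists_mem_eq_one_of_sum_le {ι : Type*} {T A : Finset ι} {f : ι → ℕ} {m : ℕ}
    (hAT : A ⊆ T) (hf : ∀ a ∈ T, 1 ≤ f a) (hsum : ∑ a ∈ T, f a ≤ #T + m) (hA : m < #A) :
    ∃ a ∈ A, f a = 1 := by
  classical
  by_contra! hne
  have hA2 : 2 * #A ≤ ∑ a ∈ A, f a := by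
    rw [mul_comm, ← smul_eq_mul, ← sum_const]
    exact sum_le_sum fun a ha => by have := hf a (hAT ha); have := hne a ha; omega
  have hrest : #(T \ A) ≤ ∑ a ∈ T \ A, f a := by
    rw [card_eq_sum_ones]
    exact sum_le_sum fun a ha => hf a (mem_sdiff.1 ha).1
  have := sum_sdiff hAT (f := f)
  have := card_sdiff_of_subset hAT
  have := card_le_card hAT
  omega

lemma Finset.lt_card_filter_of_val_map_eq {ι : Type*} {T : Finset ι} {v : ι → ℝ}
    {f : ℕ → ℝ} {s m : ℕ} {y : ℝ} (hmap : T.val.map v = (Multiset.range s).map f)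
    (hms : m < s) (hf : ∀ l ≤ m, y ≤ f l) : m < #{a ∈ T | y ≤ v a} := by
  have hcount := congrArg (Multiset.countP (y ≤ ·)) hmap
  rw [Multiset.countP_map, Multiset.countP_map] at hcount
  have hsub : range (m + 1) ⊆ {l ∈ range s | y ≤ f l} := fun l hl => by
    rw [mem_range] at hl
    exact mem_filter.2 ⟨mem_range.2 (by omega), hf l (by omega)⟩
  have := card_le_card hsub
  rw [card_range] at this
  exact Nat.lt_of_succ_le (this.trans_eq hcount.symm)

variable {n s : ℕ}

def configCount (S : Schedule n s) (p : Config n → Bool) : ℕ :=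
  ∑ h, (S h).countP p

def configWeight (S : Schedule n s) (p : Config n → Bool) : ℝ :=
  ∑ h, (((S h).filter p).map Prod.snd).sum

lemma sum_configCount_le {ι : Type*} (S : Schedule n s) (T : Finset ι)
    (p : ι → Config n → Bool) (hp : ∀ c, ∀ a ∈ T, ∀ b ∈ T, p a c → p b c → a = b) :
    ∑ a ∈ T, configCount S (p a) ≤ ∑ h, (S h).length := by
  unfold configCount
  rw [sum_comm]
  exact sum_le_sum fun h _ => List.sum_countP_le_length T p hp (S h)

lemma configWeight_eq_zero_of_configCount_eq_zero {S : Schedule n s} {p : Config n → Bool}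
    (h0 : configCount S p = 0) : configWeight S p = 0 := by
  refine sum_eq_zero fun h _ => ?_
  have hfilter : (S h).filter p = [] :=
    List.filter_eq_nil_iff.2 (List.countP_eq_zero.1 (sum_eq_zero_iff.1 h0 h (mem_univ h)))
  simp [hfilter]

lemma exists_mem_configWeight_eq_of_configCount_eq_one {S : Schedule n s}
    {p : Config n → Bool} (h1 : configCount S p = 1) :
    ∃ h, ∃ c ∈ S h, configWeight S p = c.2 := by
  obtain ⟨h₀, -, hne⟩ := exists_ne_zero_of_sum_ne_zero (h1.trans_ne one_ne_zero)
  have hle : (S h₀).countP p ≤ 1 :=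
    h1 ▸ single_le_sum (f := fun h => (S h).countP p) (fun _ _ => Nat.zero_le _) (mem_univ h₀)
  have hrest : ∀ h ≠ h₀, (S h).countP p = 0 := by
    intro h hh
    have := add_sum_erase univ (fun h => (S h).countP p) (mem_univ h₀)
    have := single_le_sum (f := fun h => (S h).countP p) (fun _ _ => Nat.zero_le _)
      (mem_erase.2 ⟨hh, mem_univ h⟩)
    unfold configCount at h1
    omega
  obtain ⟨c, hc⟩ := List.length_eq_one_iff.1
    (List.countP_eq_length_filter.symm.trans (by omega : (S h₀).countP p = 1))
  refine ⟨h₀, c, List.mem_of_mem_filter (hc ▸ List.mem_singleton_self c), ?_⟩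
  rw [configWeight, sum_eq_single h₀ (fun h _ hh => ?_) (by simp)]
  · simp [hc]
  · simp [List.filter_eq_nil_iff.2 (List.countP_eq_zero.1 (hrest h hh))]

lemma add_le_load_of_mem {δ : ℝ} (hδ : 0 ≤ δ) {S : Schedule n s} (hval : ValidWeights S)
    {h : Fin s} {c : Config n} (hc : c ∈ S h) : δ + c.2 ≤ load δ S h :=
  List.single_le_sum (fun _ hy => by
      obtain ⟨c', hc', rfl⟩ := List.mem_map.1 hy
      linarith [hval h c' hc'])
    _ (List.mem_map_of_mem hc)

lemma load_le_makespan (δ : ℝ) (S : Schedule n s) (h : Fin s) : load δ S h ≤ makespan δ S :=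
  le_ciSup (Set.finite_range _).bddAbove h

lemma add_configWeight_le_makespan {δ : ℝ} (hδ : 0 ≤ δ) {S : Schedule n s}
    (hval : ValidWeights S) {p : Config n → Bool} (h1 : configCount S p = 1) :
    δ + configWeight S p ≤ makespan δ S := by
  obtain ⟨h, c, hc, hw⟩ := exists_mem_configWeight_eq_of_configCount_eq_one h1
  rw [hw]
  exact (add_le_load_of_mem hδ hval hc).trans (load_le_makespan δ S h)

lemma add_le_makespan_of_exclusive {ι : Type*} {δ y : ℝ} {m : ℕ} (hδ : 0 ≤ δ)
    {S : Schedule n s} (hval : ValidWeights S) (T : Finset ι) (v : ι → ℝ)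
    (p : ι → Config n → Bool) (hp : ∀ c, ∀ a ∈ T, ∀ b ∈ T, p a c → p b c → a = b)
    (hv : ∀ a ∈ T, 0 < v a) (hserv : ∀ a ∈ T, v a ≤ configWeight S (p a))
    (htot : ∑ h, (S h).length ≤ #T + m) (hA : m < #{a ∈ T | y ≤ v a}) :
    δ + y ≤ makespan δ S := by
  have hcount : ∀ a ∈ T, 1 ≤ configCount S (p a) := by
    intro a ha
    by_contra! h0
    have := configWeight_eq_zero_of_configCount_eq_zero (Nat.lt_one_iff.1 h0)
    linarith [hv a ha, hserv a ha]
  obtain ⟨a, haA, ha1⟩ := exists_mem_eq_one_of_sum_le (filter_subset _ T) hcount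
    ((sum_configCount_le S T p hp).trans htot) hA
  rw [mem_filter] at haA
  calc δ + y ≤ δ + configWeight S (p a) := by linarith [hserv a haA.1]
    _ ≤ makespan δ S := add_configWeight_le_makespan hδ hval ha1

theorem makespan_ge_delta_add_x_succ_m_general {n s : ℕ} (hs : 1 ≤ s)
    (D : Matrix (Fin n) (Fin n) ℝ) (hD : ∀ i j, 0 ≤ D i j)
    (δ : ℝ) (hδ : 0 < δ)
    (S : Schedule n s) (hval : ValidWeights S) (hcov : Covers D S)
    (x : ℕ → ℝ)
    (hxanti : ∀ j₁ j₂, 1 ≤ j₁ → j₁ ≤ j₂ → j₂ ≤ s → x j₂ ≤ x j₁)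
    (hrc :
      (∃ i, ((univ.filter fun j => D i j ≠ 0).val.map fun j => D i j)
          = (Multiset.range s).map fun l => x (l + 1)) ∨
      (∃ j, ((univ.filter fun i => D i j ≠ 0).val.map fun i => D i j)
          = (Multiset.range s).map fun l => x (l + 1)))
    (m : ℕ) (hm : m ≤ s - 1)
    (htot : ∑ h : Fin s, (S h).length = s + m) :
    δ + x (m + 1) ≤ makespan δ S := by
  have hms : m < s := by omega
  have of_line : ∀ (T : Finset (Fin n)) (v : Fin n → ℝ) (p : Fin n → Config n → Bool),
      (∀ c, ∀ a ∈ T, ∀ b ∈ T, p a c → p b c → a = b) → (∀ a ∈ T, 0 < v a) →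
      (∀ a ∈ T, v a ≤ configWeight S (p a)) →
      T.val.map v = (Multiset.range s).map (fun l => x (l + 1)) →
      δ + x (m + 1) ≤ makespan δ S := by
    intro T v p hp hv hserv hmap
    have hT : #T = s := by simpa using congrArg Multiset.card hmap
    refine add_le_makespan_of_exclusive (m := m) hδ.le hval T v p hp hv hserv (by omega) ?_
    exact lt_card_filter_of_val_map_eq hmap hms
      fun l hl => hxanti (l + 1) (m + 1) (by omega) (by omega) hms
  rcases hrc with ⟨i, hi⟩ | ⟨j, hj⟩
  · refine of_line _ _ (fun a c => decide (c.1 i = a)) ?_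
      (fun a ha => (hD i a).lt_of_ne' (mem_filter.1 ha).2) (fun a _ => hcov i a) hi
    simp only [decide_eq_true_eq]
    rintro c a - b - rfl rfl
    rfl
  · refine of_line _ _ (fun a c => decide (c.1 a = j)) ?_
      (fun a ha => (hD a j).lt_of_ne' (mem_filter.1 ha).2) (fun a _ => hcov a j) hj
    simp only [decide_eq_true_eq]
    exact fun c a _ b _ ha hb => c.1.injective (ha.trans hb.symm)

/-- If some row or some column of `D` has exactly `s` nonzero entries, whose
values in non-increasing order are `x 1 ≥ x 2 ≥ ⋯ ≥ x s > 0` (with `x j = 0`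
for `j > s`), and the covering schedule uses `s + m` configurations in total
with `0 ≤ m ≤ s - 1`, then the makespan is at least `δ + x (m+1)`. -/
theorem makespan_ge_delta_add_x_succ_m {n s : ℕ} (hs : 1 ≤ s)
    (D : Matrix (Fin n) (Fin n) ℝ) (hD : ∀ i j, 0 ≤ D i j)
    (δ : ℝ) (hδ : 0 < δ)
    (S : Schedule n s) (hval : ValidWeights S) (hcov : Covers D S)
    (x : ℕ → ℝ)
    (hxpos : ∀ j, 1 ≤ j → j ≤ s → 0 < x j)
    (hxanti : ∀ j₁ j₂, 1 ≤ j₁ → j₁ ≤ j₂ → j₂ ≤ s → x j₂ ≤ x j₁)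
    (hx0 : ∀ j, s < j → x j = 0)
    (hrc :
      (∃ i, ((univ.filter fun j => D i j ≠ 0).val.map fun j => D i j)
          = (Multiset.range s).map fun l => x (l + 1)) ∨
      (∃ j, ((univ.filter fun i => D i j ≠ 0).val.map fun i => D i j)
          = (Multiset.range s).map fun l => x (l + 1)))
    (m : ℕ) (hm : m ≤ s - 1)
    (htot : ∑ h : Fin s, (S h).length = s + m) :
    δ + x (m + 1) ≤ makespan δ S :=
  makespan_ge_delta_add_x_succ_m_general hs D hD δ hδ S hval hcov x hxanti hrc m hm htot
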